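/- arXiv:2502.00546 — 3 statements merged into one kernel-verified Lean document; each statement's English description precedes it below -/
import Mathlib

section
/- Let P and Q be orthogonal projections on a finite-dimensional complex Hilbert space H. Then P Q P = Q P Q if and only if P and Q commute. -/
/-!
If `p` and `q` are idempotents with `pqp = qpq`, the commutator `a = pq - qp` squares to zero:
`pqpq = qpq` and `qpqp = pqp`, so `a² = pqpq - pqp - qpq + qpqp = 0`. When `p` and `q` are
moreover symmetric, `a` is skew-symmetric, so `‖a x‖² = ⟪a x, a x⟫ = -⟪x, a² x⟫ = 0` and `a = 0`.
-/

open scoped InnerProductSpace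

section Ring

variable {R : Type*} [Ring R] {p q : R}

theorem IsIdempotentElem.commutator_mul_self_eq_zero (hp : IsIdempotentElem p)
    (hq : IsIdempotentElem q) (h : p * q * p = q * p * q) :
    (p * q - q * p) * (p * q - q * p) = 0 := by
  have hpqpq : p * q * p * q = q * p * q := by rw [h, mul_assoc, hq.eq]
  have hqpqp : q * p * q * p = p * q * p := by rw [← h, mul_assoc, hp.eq]
  calc (p * q - q * p) * (p * q - q * p)
      = p * q * p * q - p * (q * q) * p - q * (p * p) * q + q * p * q * p := by noncomm_ring
    _ = 0 := by rw [hpqpq, hqpqp, hp.eq, hq.eq, h]; abel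

theorem Commute.mul_mul_eq_of_isIdempotentElem (hpq : Commute p q) (hp : IsIdempotentElem p)
    (hq : IsIdempotentElem q) : p * q * p = q * p * q := by
  calc p * q * p = p * p * q := hpq.symm.right_comm p
    _ = q * q * p := by rw [hp.eq, hq.eq, hpq.eq]
    _ = q * p * q := (hpq.right_comm q).symm

end Ring

namespace LinearMap

variable {𝕜 E : Type*} [RCLike 𝕜] [NormedAddCommGroup E] [InnerProductSpace 𝕜 E]

theorem IsSymmetric.inner_commutator_left {S T : E →ₗ[𝕜] E} (hS : S.IsSymmetric)
    (hT : T.IsSymmetric) (x y : E) :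
    ⟪(S * T - T * S) x, y⟫_𝕜 = -⟪x, (S * T - T * S) y⟫_𝕜 := by
  simp only [sub_apply, Module.End.mul_apply, inner_sub_left, inner_sub_right, hS _ y,
    hT _ y, hS x, hT x, neg_sub]

theorem eq_zero_of_mul_self_eq_zero_of_inner_map_left_eq_neg {A : E →ₗ[𝕜] E}
    (hA : ∀ x y, ⟪A x, y⟫_𝕜 = -⟪x, A y⟫_𝕜) (h : A * A = 0) : A = 0 := by
  ext x
  rw [zero_apply, ← inner_self_eq_zero (𝕜 := 𝕜), hA, ← Module.End.mul_apply, h, zero_apply,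
    inner_zero_right, neg_zero]

theorem IsSymmetricProjection.mul_mul_eq_iff_commute {p q : E →ₗ[𝕜] E}
    (hp : p.IsSymmetricProjection) (hq : q.IsSymmetricProjection) :
    p * q * p = q * p * q ↔ Commute p q := by
  refine ⟨fun h ↦ ?_, fun hpq ↦ hpq.mul_mul_eq_of_isIdempotentElem hp.isIdempotentElem
    hq.isIdempotentElem⟩
  have hskew := hp.isSymmetric.inner_commutator_left hq.isSymmetric
  have hsq := hp.isIdempotentElem.commutator_mul_self_eq_zero hq.isIdempotentElem h
  exact sub_eq_zero.mp (eq_zero_of_mul_self_eq_zero_of_inner_map_left_eq_neg hskew hsq)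

end LinearMap

theorem stmt_0_general {H : Type*} [NormedAddCommGroup H] [InnerProductSpace ℂ H]
    (P Q : H →ₗ[ℂ] H)
    (hPidem : P ∘ₗ P = P) (hPsa : ∀ x y : H, ⟪P x, y⟫_ℂ = ⟪x, P y⟫_ℂ)
    (hQidem : Q ∘ₗ Q = Q) (hQsa : ∀ x y : H, ⟪Q x, y⟫_ℂ = ⟪x, Q y⟫_ℂ) :
    P ∘ₗ Q ∘ₗ P = Q ∘ₗ P ∘ₗ Q ↔ P ∘ₗ Q = Q ∘ₗ P :=
  LinearMap.IsSymmetricProjection.mul_mul_eq_iff_commute ⟨hPidem, hPsa⟩ ⟨hQidem, hQsa⟩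

/-- For orthogonal projections `P`, `Q` on a finite-dimensional complex
Hilbert space, `P Q P = Q P Q` iff `P` and `Q` commute. -/
theorem stmt_0 {H : Type*} [NormedAddCommGroup H] [InnerProductSpace ℂ H]
    [FiniteDimensional ℂ H] (P Q : H →ₗ[ℂ] H)
    (hPidem : P ∘ₗ P = P) (hPsa : ∀ x y : H, ⟪P x, y⟫_ℂ = ⟪x, P y⟫_ℂ)
    (hQidem : Q ∘ₗ Q = Q) (hQsa : ∀ x y : H, ⟪Q x, y⟫_ℂ = ⟪x, Q y⟫_ℂ) :
    P ∘ₗ Q ∘ₗ P = Q ∘ₗ P ∘ₗ Q ↔ P ∘ₗ Q = Q ∘ₗ P :=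
  stmt_0_general P Q hPidem hPsa hQidem hQsa
end

section
/- Suppose for each unit vector ψ in a finite-dimensional complex Hilbert space we are given a probability measure μ_ψ on a measurable space Λ, and measurable functions f_A, f_B : Λ → ℝ such that for all eigenvalues α of A and β of B: ⟨ψ, P_α ψ⟩ = μ_ψ(f_A⁻¹{α}), ⟨ψ, Q_β ψ⟩ = μ_ψ(f_B⁻¹{β}), and whenever ⟨ψ, P_α ψ⟩ ≠ 0 the updated state ψ' = P_α ψ/‖P_α ψ‖ satisfies μ_{ψ'} = μ_ψ(· | f_A⁻¹{α}) (and symmetrically with A, B exchanged). Then for every unit vector ψ and all α, β: ⟨ψ, P_α Q_β P_α ψ⟩ = μ_ψ(f_A⁻¹{α} ∩ f_B⁻¹{β}) = ⟨ψ, Q_β P_α Q_β ψ⟩. -/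
open scoped InnerProductSpace
open MeasureTheory

/-- The spectral projection of `A` for the value `α`: the orthogonal projection of `H`
onto the eigenspace `ker (A - α • id)`. -/
noncomputable def specProj {H : Type*} [NormedAddCommGroup H] [InnerProductSpace ℂ H]
    [FiniteDimensional ℂ H] (A : H →ₗ[ℂ] H) (α : ℂ) : H →ₗ[ℂ] H :=
  ((Module.End.eigenspace A α).subtypeL.comp
    (Submodule.orthogonalProjection (Module.End.eigenspace A α))).toLinearMap


lemma specProj_apply {H : Type*} [NormedAddCommGroup H] [InnerProductSpace ℂ H]
    [FiniteDimensional ℂ H] (A : H →ₗ[ℂ] H) (α : ℂ) (x : H) :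
    specProj A α x = (Submodule.orthogonalProjection (Module.End.eigenspace A α) x : H) := rfl

lemma specProj_symm {H : Type*} [NormedAddCommGroup H] [InnerProductSpace ℂ H]
    [FiniteDimensional ℂ H] (A : H →ₗ[ℂ] H) (α : ℂ) (x y : H) :
    ⟪specProj A α x, y⟫_ℂ = ⟪x, specProj A α y⟫_ℂ := by
  simp only [specProj_apply]
  exact Submodule.inner_starProjection_left_eq_right _ x y

lemma specProj_idem {H : Type*} [NormedAddCommGroup H] [InnerProductSpace ℂ H]
    [FiniteDimensional ℂ H] (A : H →ₗ[ℂ] H) (α : ℂ) (x : H) :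
    specProj A α (specProj A α x) = specProj A α x := by
  simp only [specProj_apply]
  exact congrArg _ (Submodule.orthogonalProjection_mem_subspace_eq_self _)

lemma inner_specProj_self {H : Type*} [NormedAddCommGroup H] [InnerProductSpace ℂ H]
    [FiniteDimensional ℂ H] (A : H →ₗ[ℂ] H) (α : ℂ) (x : H) :
    ⟪x, specProj A α x⟫_ℂ = ((‖specProj A α x‖ : ℂ)) ^ 2 := by
  conv_lhs => rw [← specProj_idem A α x, ← specProj_symm]
  exact inner_self_eq_norm_sq_to_K _

lemma key_lemma {H : Type*} [NormedAddCommGroup H] [InnerProductSpace ℂ H]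
    [FiniteDimensional ℂ H] (A B : H →ₗ[ℂ] H)
    {Λ : Type*} [MeasurableSpace Λ] (μ : H → Measure Λ)
    (hprob : ∀ ψ : H, ‖ψ‖ = 1 → IsProbabilityMeasure (μ ψ))
    (fA fB : Λ → ℝ) (hfA : Measurable fA)
    (hBornA : ∀ ψ : H, ‖ψ‖ = 1 → ∀ α : ℝ, Module.End.HasEigenvalue A (α : ℂ) →
      ⟪ψ, specProj A (α : ℂ) ψ⟫_ℂ = ((μ ψ (fA ⁻¹' {α})).toReal : ℂ))
    (hBornB : ∀ ψ : H, ‖ψ‖ = 1 → ∀ β : ℝ, Module.End.HasEigenvalue B (β : ℂ) →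
      ⟪ψ, specProj B (β : ℂ) ψ⟫_ℂ = ((μ ψ (fB ⁻¹' {β})).toReal : ℂ))
    (hUpdA : ∀ ψ : H, ‖ψ‖ = 1 → ∀ α : ℝ, Module.End.HasEigenvalue A (α : ℂ) →
      ⟪ψ, specProj A (α : ℂ) ψ⟫_ℂ ≠ 0 →
      μ ((‖specProj A (α : ℂ) ψ‖⁻¹ : ℂ) • specProj A (α : ℂ) ψ)
        = ProbabilityTheory.cond (μ ψ) (fA ⁻¹' {α}))
    (ψ : H) (hψ : ‖ψ‖ = 1) (α β : ℝ)
    (hα : Module.End.HasEigenvalue A (α : ℂ)) (hβ : Module.End.HasEigenvalue B (β : ℂ)) :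
    ⟪ψ, specProj A (α : ℂ) (specProj B (β : ℂ) (specProj A (α : ℂ) ψ))⟫_ℂ
        = ((μ ψ (fA ⁻¹' {α} ∩ fB ⁻¹' {β})).toReal : ℂ) := by
  have hPm := hprob ψ hψ
  set P : H →ₗ[ℂ] H := specProj A (α : ℂ)
  set Q : H →ₗ[ℂ] H := specProj B (β : ℂ)
  have hfin : μ ψ (fA ⁻¹' {α}) ≠ ⊤ := measure_ne_top _ _
  have hLHS : ⟪ψ, P (Q (P ψ))⟫_ℂ = ⟪P ψ, Q (P ψ)⟫_ℂ := (specProj_symm A (α : ℂ) ψ (Q (P ψ))).symm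
  by_cases h0 : μ ψ (fA ⁻¹' {α}) = 0
  · have hP0 : ⟪ψ, P ψ⟫_ℂ = 0 := by
      rw [hBornA ψ hψ α hα, h0]; simp
    have hPψ : P ψ = 0 := by
      have := inner_specProj_self A (α : ℂ) ψ
      rw [hP0] at this
      have : (‖P ψ‖ : ℂ) = 0 := by
        have := this.symm
        exact pow_eq_zero_iff (n := 2) (by norm_num) |>.mp this
      simpa [norm_eq_zero] using Complex.ofReal_eq_zero.mp this
    have h0' : μ ψ (fA ⁻¹' {α} ∩ fB ⁻¹' {β}) = 0 :=
      measure_mono_null Set.inter_subset_left h0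
    rw [hLHS, hPψ, h0']; simp
  · have hP : ⟪ψ, P ψ⟫_ℂ ≠ 0 := by
      rw [hBornA ψ hψ α hα]
      simpa using ENNReal.toReal_ne_zero.mpr ⟨h0, hfin⟩
    have hn : ‖P ψ‖ ≠ 0 := by
      intro h
      apply hP
      rw [inner_specProj_self, h]; simp
    set ψ' : H := (‖P ψ‖⁻¹ : ℂ) • P ψ with hψ'def
    have hψ'1 : ‖ψ'‖ = 1 := by
      rw [hψ'def, norm_smul]
      simp [norm_inv, inv_mul_cancel₀ hn]
    have hμψ' : μ ψ' = ProbabilityTheory.cond (μ ψ) (fA ⁻¹' {α}) := hUpdA ψ hψ α hα hP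
    have hB' := hBornB ψ' hψ'1 β hβ
    have hinner : ⟪ψ', Q ψ'⟫_ℂ = ((‖P ψ‖ : ℂ)⁻¹)^2 * ⟪P ψ, Q (P ψ)⟫_ℂ := by
      rw [hψ'def]
      simp only [_root_.map_smul, inner_smul_left, inner_smul_right, map_inv₀,
        Complex.conj_ofReal]
      ring
    have hcond : μ ψ' (fB ⁻¹' {β})
        = (μ ψ (fA ⁻¹' {α}))⁻¹ * μ ψ (fA ⁻¹' {α} ∩ fB ⁻¹' {β}) := by
      rw [hμψ', ProbabilityTheory.cond_apply (hfA (measurableSet_singleton α))]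
    have hnorm2 : ((‖P ψ‖ : ℂ))^2 = ((μ ψ (fA ⁻¹' {α})).toReal : ℂ) := by
      rw [← inner_specProj_self, hBornA ψ hψ α hα]
    have htoReal : (μ ψ' (fB ⁻¹' {β})).toReal
        = ((μ ψ (fA ⁻¹' {α})).toReal)⁻¹ * (μ ψ (fA ⁻¹' {α} ∩ fB ⁻¹' {β})).toReal := by
      rw [hcond, ENNReal.toReal_mul, ENNReal.toReal_inv]
    rw [hLHS]
    have := hB'
    rw [hinner, htoReal] at this
    -- this : (‖Pψ‖⁻¹)^2 * ⟪Pψ, Q Pψ⟫ = ↑((μψ A).toReal⁻¹ * (μψ A∩B).toReal)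
    have hne : ((μ ψ (fA ⁻¹' {α})).toReal : ℂ) ≠ 0 := by
      simpa using ENNReal.toReal_ne_zero.mpr ⟨h0, hfin⟩
    have h2 : ⟪P ψ, Q (P ψ)⟫_ℂ
        = ((‖P ψ‖ : ℂ))^2 * (((μ ψ (fA ⁻¹' {α})).toReal : ℂ)⁻¹
            * ((μ ψ (fA ⁻¹' {α} ∩ fB ⁻¹' {β})).toReal : ℂ)) := by
      have hinv : ((‖P ψ‖ : ℂ))^2 * ((‖P ψ‖ : ℂ)⁻¹)^2 = 1 := by
        rw [← mul_pow, mul_inv_cancel₀ (by exact_mod_cast hn), one_pow]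
      calc ⟪P ψ, Q (P ψ)⟫_ℂ
          = ((‖P ψ‖ : ℂ))^2 * (((‖P ψ‖ : ℂ)⁻¹)^2 * ⟪P ψ, Q (P ψ)⟫_ℂ) := by
            rw [← mul_assoc, hinv, one_mul]
        _ = _ := by rw [this]; push_cast; ring
    rw [h2, hnorm2, ← mul_assoc, mul_inv_cancel₀ hne, one_mul]

/-- a state-updating deterministic underlying-state model for `A` and `B`
(Born rule plus Lüders update realised as conditioning) forces the order-independent
sequential probabilities
`⟪ψ, P_α Q_β P_α ψ⟫ = μ_ψ(f_A⁻¹{α} ∩ f_B⁻¹{β}) = ⟪ψ, Q_β P_α Q_β ψ⟫`. -/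
theorem stmt_13 {H : Type*} [NormedAddCommGroup H] [InnerProductSpace ℂ H]
    [FiniteDimensional ℂ H] (A B : H →ₗ[ℂ] H)
    (hAsa : ∀ x y : H, ⟪A x, y⟫_ℂ = ⟪x, A y⟫_ℂ)
    (hBsa : ∀ x y : H, ⟪B x, y⟫_ℂ = ⟪x, B y⟫_ℂ)
    {Λ : Type*} [MeasurableSpace Λ] (μ : H → Measure Λ)
    (hprob : ∀ ψ : H, ‖ψ‖ = 1 → IsProbabilityMeasure (μ ψ))
    (fA fB : Λ → ℝ) (hfA : Measurable fA) (hfB : Measurable fB)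
    (hBornA : ∀ ψ : H, ‖ψ‖ = 1 → ∀ α : ℝ, Module.End.HasEigenvalue A (α : ℂ) →
      ⟪ψ, specProj A (α : ℂ) ψ⟫_ℂ = ((μ ψ (fA ⁻¹' {α})).toReal : ℂ))
    (hBornB : ∀ ψ : H, ‖ψ‖ = 1 → ∀ β : ℝ, Module.End.HasEigenvalue B (β : ℂ) →
      ⟪ψ, specProj B (β : ℂ) ψ⟫_ℂ = ((μ ψ (fB ⁻¹' {β})).toReal : ℂ))
    (hUpdA : ∀ ψ : H, ‖ψ‖ = 1 → ∀ α : ℝ, Module.End.HasEigenvalue A (α : ℂ) →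
      ⟪ψ, specProj A (α : ℂ) ψ⟫_ℂ ≠ 0 →
      μ ((‖specProj A (α : ℂ) ψ‖⁻¹ : ℂ) • specProj A (α : ℂ) ψ)
        = ProbabilityTheory.cond (μ ψ) (fA ⁻¹' {α}))
    (hUpdB : ∀ ψ : H, ‖ψ‖ = 1 → ∀ β : ℝ, Module.End.HasEigenvalue B (β : ℂ) →
      ⟪ψ, specProj B (β : ℂ) ψ⟫_ℂ ≠ 0 →
      μ ((‖specProj B (β : ℂ) ψ‖⁻¹ : ℂ) • specProj B (β : ℂ) ψ)
        = ProbabilityTheory.cond (μ ψ) (fB ⁻¹' {β})) :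
    ∀ ψ : H, ‖ψ‖ = 1 → ∀ α β : ℝ,
      Module.End.HasEigenvalue A (α : ℂ) → Module.End.HasEigenvalue B (β : ℂ) →
      ⟪ψ, specProj A (α : ℂ) (specProj B (β : ℂ) (specProj A (α : ℂ) ψ))⟫_ℂ
          = ((μ ψ (fA ⁻¹' {α} ∩ fB ⁻¹' {β})).toReal : ℂ) ∧
      ((μ ψ (fA ⁻¹' {α} ∩ fB ⁻¹' {β})).toReal : ℂ)
          = ⟪ψ, specProj B (β : ℂ) (specProj A (α : ℂ) (specProj B (β : ℂ) ψ))⟫_ℂ := by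
  intro ψ hψ α β hα hβ
  exact ⟨key_lemma A B μ hprob fA fB hfA hBornA hBornB hUpdA ψ hψ α β hα hβ,
    by rw [Set.inter_comm];
       exact (key_lemma B A μ hprob fB fA hfB hBornB hBornA hUpdB ψ hψ β α hβ hα).symm⟩
end

section
/- If there exists a state-updating deterministic underlying-state model for two self-adjoint operators A and B on a finite-dimensional complex Hilbert space (i.e., a measurable space Λ, measurable functions f_A, f_B : Λ → ℝ, and for each unit vector ψ a probability measure μ_ψ reproducing the Born probabilities of A and B and transforming under Lüders update of ψ by spectral projections of A or B as conditioning of μ_ψ on the corresponding preimage sets), then A and B commute. -/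
open scoped InnerProductSpace
open MeasureTheory

section Aux

variable {H : Type*} [NormedAddCommGroup H] [InnerProductSpace ℂ H] [FiniteDimensional ℂ H]

lemma specProj_apply' (T : H →ₗ[ℂ] H) (c : ℂ) (x : H) :
    specProj T c x = (Submodule.orthogonalProjection (Module.End.eigenspace T c) x : H) := rfl

lemma specProj_mem (T : H →ₗ[ℂ] H) (c : ℂ) (x : H) :
    specProj T c x ∈ Module.End.eigenspace T c :=
  (Submodule.orthogonalProjection (Module.End.eigenspace T c) x).2

lemma inner_specProj_self_s14 (T : H →ₗ[ℂ] H) (c : ℂ) (ψ : H) :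
    ⟪ψ, specProj T c ψ⟫_ℂ = ((‖specProj T c ψ‖ ^ 2 : ℝ) : ℂ) := by
  set p : H := specProj T c ψ with hp
  have h0 : ⟪ψ - p, p⟫_ℂ = 0 :=
    Submodule.starProjection_inner_eq_zero ψ p (specProj_mem T c ψ)
  have h1 : ⟪ψ, p⟫_ℂ = ⟪ψ - p, p⟫_ℂ + ⟪p, p⟫_ℂ := by
    rw [inner_sub_left]; ring
  rw [h1, h0, zero_add, inner_self_eq_norm_sq_to_K]
  norm_cast

lemma specProj_eq_self (T : H →ₗ[ℂ] H) (c : ℂ) {ψ : H}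
    (h : ψ ∈ Module.End.eigenspace T c) : specProj T c ψ = ψ := by
  rw [specProj_apply']; exact Submodule.starProjection_eq_self_iff.2 h

lemma mem_of_inner_specProj_eq_one (T : H →ₗ[ℂ] H) (c : ℂ) {φ : H} (hφ : ‖φ‖ = 1)
    (h : ⟪φ, specProj T c φ⟫_ℂ = 1) : φ ∈ Module.End.eigenspace T c := by
  set K := Module.End.eigenspace T c
  have h1 : ((‖specProj T c φ‖ ^ 2 : ℝ) : ℂ) = 1 := by rw [← inner_specProj_self_s14, h]
  have h2 : ‖specProj T c φ‖ ^ 2 = 1 := by exact_mod_cast h1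
  have hpyth := Submodule.norm_sq_eq_add_norm_sq_projection φ K
  have hKnorm : ‖K.orthogonalProjectionOnto φ‖ = ‖specProj T c φ‖ := rfl
  rw [hφ, hKnorm, h2] at hpyth
  have h4 : (Kᗮ.orthogonalProjectionOnto φ : H) = 0 := by
    have : ‖Kᗮ.orthogonalProjectionOnto φ‖ = 0 := by
      nlinarith [norm_nonneg (Kᗮ.orthogonalProjectionOnto φ)]
    simpa [norm_eq_zero] using this
  have h5 : (K.orthogonalProjectionOnto φ : H) + (Kᗮ.orthogonalProjectionOnto φ : H) = φ :=
    Submodule.starProjection_add_starProjection_orthogonal (K := K) φ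
  rw [h4, add_zero] at h5
  rw [← h5]
  exact (K.orthogonalProjectionOnto φ).2

lemma sum_specProj {B : H →ₗ[ℂ] H} (hB : B.IsSymmetric) (x : H) :
    ∃ s : Finset ℝ, ∑ β ∈ s, specProj B (β : ℂ) x = x := by
  have hn : Module.finrank ℂ H = Module.finrank ℂ H := rfl
  set e := hB.eigenvectorBasis hn with he
  set ev := hB.eigenvalues hn with hev
  refine ⟨Finset.image ev Finset.univ, ?_⟩
  set s := Finset.image ev Finset.univ with hs
  set y := x - ∑ β ∈ s, specProj B (β : ℂ) x with hy
  have hinner : ∀ i, ⟪e i, y⟫_ℂ = 0 := by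
    intro i
    have hei : e i ∈ Module.End.eigenspace B ((ev i : ℝ) : ℂ) :=
      (hB.hasEigenvector_eigenvectorBasis hn i).1
    rw [hy, inner_sub_right, inner_sum]
    rw [Finset.sum_eq_single_of_mem (ev i)
      (Finset.mem_image_of_mem ev (Finset.mem_univ i))]
    · have h1 : ⟪e i, specProj B ((ev i : ℝ) : ℂ) x⟫_ℂ = ⟪e i, x⟫_ℂ := by
        exact Submodule.inner_orthogonalProjectionOnto_eq_of_mem_left
          (K := Module.End.eigenspace B ((ev i : ℝ) : ℂ)) ⟨e i, hei⟩ x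
      rw [h1, sub_self]
    · intro β _ hne
      have hne' : ((ev i : ℝ) : ℂ) ≠ ((β : ℝ) : ℂ) := by
        exact_mod_cast fun h => hne (by exact_mod_cast h.symm)
      exact hB.orthogonalFamily_eigenspaces hne' ⟨e i, hei⟩ ⟨_, specProj_mem B β x⟩
  have hy0 : y = 0 := by
    have h := e.sum_repr' y
    rw [← h]
    simp [hinner]
  exact (sub_eq_zero.mp hy0).symm

end Aux

/-- if there exists a state-updating deterministic underlying-state model
for self-adjoint operators `A` and `B` (a measurable space `Λ`, measurable functions
`f_A, f_B : Λ → ℝ`, and probability measures `μ_ψ` reproducing the Born probabilities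
and transforming under Lüders update as conditioning), then `A` and `B` commute. -/
theorem stmt_14 {H : Type*} [NormedAddCommGroup H] [InnerProductSpace ℂ H]
    [FiniteDimensional ℂ H] (A B : H →ₗ[ℂ] H)
    (hAsa : ∀ x y : H, ⟪A x, y⟫_ℂ = ⟪x, A y⟫_ℂ)
    (hBsa : ∀ x y : H, ⟪B x, y⟫_ℂ = ⟪x, B y⟫_ℂ)
    {Λ : Type*} [MeasurableSpace Λ] (μ : H → Measure Λ)
    (hprob : ∀ ψ : H, ‖ψ‖ = 1 → IsProbabilityMeasure (μ ψ))
    (fA fB : Λ → ℝ) (hfA : Measurable fA) (hfB : Measurable fB)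
    (hBornA : ∀ ψ : H, ‖ψ‖ = 1 → ∀ α : ℝ, Module.End.HasEigenvalue A (α : ℂ) →
      ⟪ψ, specProj A (α : ℂ) ψ⟫_ℂ = ((μ ψ (fA ⁻¹' {α})).toReal : ℂ))
    (hBornB : ∀ ψ : H, ‖ψ‖ = 1 → ∀ β : ℝ, Module.End.HasEigenvalue B (β : ℂ) →
      ⟪ψ, specProj B (β : ℂ) ψ⟫_ℂ = ((μ ψ (fB ⁻¹' {β})).toReal : ℂ))
    (hUpdA : ∀ ψ : H, ‖ψ‖ = 1 → ∀ α : ℝ, Module.End.HasEigenvalue A (α : ℂ) →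
      ⟪ψ, specProj A (α : ℂ) ψ⟫_ℂ ≠ 0 →
      μ ((‖specProj A (α : ℂ) ψ‖⁻¹ : ℂ) • specProj A (α : ℂ) ψ)
        = ProbabilityTheory.cond (μ ψ) (fA ⁻¹' {α}))
    (hUpdB : ∀ ψ : H, ‖ψ‖ = 1 → ∀ β : ℝ, Module.End.HasEigenvalue B (β : ℂ) →
      ⟪ψ, specProj B (β : ℂ) ψ⟫_ℂ ≠ 0 →
      μ ((‖specProj B (β : ℂ) ψ‖⁻¹ : ℂ) • specProj B (β : ℂ) ψ)
        = ProbabilityTheory.cond (μ ψ) (fB ⁻¹' {β})) :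
    A ∘ₗ B = B ∘ₗ A := by
  have hA : A.IsSymmetric := hAsa
  have hB : B.IsSymmetric := hBsa
  -- Main claim: spectral projections of B preserve eigenspaces of A (unit-vector case).
  have claim : ∀ (α β : ℝ) (ψ : H), ‖ψ‖ = 1 → ψ ∈ Module.End.eigenspace A (α : ℂ) →
      specProj B (β : ℂ) ψ ∈ Module.End.eigenspace A (α : ℂ) := by
    intro α β ψ hψ hmem
    set q := specProj B (β : ℂ) ψ with hq
    by_cases hq0 : q = 0
    · rw [hq0]; exact Submodule.zero_mem _
    have hψ0 : ψ ≠ 0 := by intro h; rw [h] at hψ; simp at hψ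
    have hαev : Module.End.HasEigenvalue A (α : ℂ) :=
      Module.End.hasEigenvalue_of_hasEigenvector ⟨hmem, hψ0⟩
    have hβev : Module.End.HasEigenvalue B (β : ℂ) :=
      Module.End.hasEigenvalue_of_hasEigenvector ⟨specProj_mem B β ψ, hq0⟩
    have hqnorm : ‖q‖ ≠ 0 := norm_ne_zero_iff.2 hq0
    have hinner : ⟪ψ, q⟫_ℂ = ((‖q‖ ^ 2 : ℝ) : ℂ) := inner_specProj_self_s14 B β ψ
    have hinner0 : ⟪ψ, q⟫_ℂ ≠ 0 := by
      rw [hinner]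
      exact_mod_cast pow_ne_zero 2 hqnorm
    haveI hpμ : IsProbabilityMeasure (μ ψ) := hprob ψ hψ
    have hA1 : μ ψ (fA ⁻¹' {α}) = 1 := by
      have hb := hBornA ψ hψ α hαev
      rw [specProj_eq_self A (α : ℂ) hmem, inner_self_eq_norm_sq_to_K, hψ] at hb
      norm_num at hb
      have h2 : (μ ψ (fA ⁻¹' {α})).toReal = 1 := by exact_mod_cast hb.symm
      exact (ENNReal.toReal_eq_one_iff _).1 h2
    have hBne : μ ψ (fB ⁻¹' {β}) ≠ 0 := by
      intro h
      have hb := hBornB ψ hψ β hβev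
      rw [h] at hb
      simp at hb
      exact hinner0 hb
    set φ := (‖q‖⁻¹ : ℂ) • q with hφ
    have hφn : ‖φ‖ = 1 := by
      rw [hφ, norm_smul]
      simp [hqnorm]
    have hupd := hUpdB ψ hψ β hβev hinner0
    have hcond : (ProbabilityTheory.cond (μ ψ) (fB ⁻¹' {β})) (fA ⁻¹' {α}) = 1 := by
      rw [ProbabilityTheory.cond_apply (hfB (measurableSet_singleton β)) (μ ψ)]
      have hint : μ ψ (fB ⁻¹' {β} ∩ fA ⁻¹' {α}) = μ ψ (fB ⁻¹' {β}) := by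
        apply measure_inter_conull
        rw [prob_compl_eq_zero_iff (hfA (measurableSet_singleton α))]
        exact hA1
      rw [hint]
      exact ENNReal.inv_mul_cancel hBne (measure_ne_top _ _)
    have hb2 := hBornA φ hφn α hαev
    rw [hupd, hcond] at hb2
    have hb3 : ⟪φ, specProj A (α : ℂ) φ⟫_ℂ = 1 := by rw [hb2]; norm_num
    have hφmem := mem_of_inner_specProj_eq_one A (α : ℂ) hφn hb3
    have hqφ : q = (‖q‖ : ℂ) • φ := by
      rw [hφ, smul_smul]
      rw [mul_inv_cancel₀ (by exact_mod_cast hqnorm : (‖q‖ : ℂ) ≠ 0), one_smul]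
    rw [hqφ]
    exact Submodule.smul_mem _ _ hφmem
  -- General (non-unit) version.
  have claim' : ∀ (α β : ℝ) (x : H), x ∈ Module.End.eigenspace A (α : ℂ) →
      specProj B (β : ℂ) x ∈ Module.End.eigenspace A (α : ℂ) := by
    intro α β x hx
    by_cases hx0 : x = 0
    · rw [hx0, map_zero]; exact Submodule.zero_mem _
    have hxn : ‖x‖ ≠ 0 := norm_ne_zero_iff.2 hx0
    set ψ := (‖x‖⁻¹ : ℂ) • x with hψdef
    have hψn : ‖ψ‖ = 1 := by
      rw [hψdef, norm_smul]
      simp [hxn]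
    have hψmem : ψ ∈ Module.End.eigenspace A (α : ℂ) :=
      Submodule.smul_mem _ _ hx
    have hxψ : x = (‖x‖ : ℂ) • ψ := by
      rw [hψdef, smul_smul, mul_inv_cancel₀ (by exact_mod_cast hxn : (‖x‖ : ℂ) ≠ 0), one_smul]
    rw [hxψ, LinearMap.map_smul]
    exact Submodule.smul_mem _ _ (claim α β ψ hψn hψmem)
  -- B preserves eigenspaces of A.
  have key : ∀ (α : ℝ) (x : H), x ∈ Module.End.eigenspace A (α : ℂ) →
      B x ∈ Module.End.eigenspace A (α : ℂ) := by
    intro α x hx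
    obtain ⟨s, hs⟩ := sum_specProj hB x
    rw [← hs, map_sum]
    apply Submodule.sum_mem
    intro β _
    have h1 : specProj B (β : ℂ) x ∈ Module.End.eigenspace B (β : ℂ) := specProj_mem B β x
    have h2 : B (specProj B (β : ℂ) x) = (β : ℂ) • specProj B (β : ℂ) x :=
      Module.End.mem_eigenspace_iff.1 h1
    rw [h2]
    exact Submodule.smul_mem _ _ (claim' α β x hx)
  -- Conclude commutation.
  have htop : (⨆ μ' : ℂ, Module.End.eigenspace A μ') = ⊤ := by
    rw [← Submodule.orthogonal_eq_bot_iff]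
    exact hA.orthogonalComplement_iSup_eigenspaces_eq_bot
  ext x
  simp only [LinearMap.comp_apply]
  have hx : x ∈ ⨆ μ' : ℂ, Module.End.eigenspace A μ' := htop ▸ Submodule.mem_top
  refine Submodule.iSup_induction (motive := fun y => A (B y) = B (A y)) _ hx ?_ ?_ ?_
  · intro μ' y hy
    by_cases hy0 : y = 0
    · simp [hy0]
    have hev : Module.End.HasEigenvalue A μ' :=
      Module.End.hasEigenvalue_of_hasEigenvector ⟨hy, hy0⟩
    have hre : (μ'.re : ℂ) = μ' := Complex.conj_eq_iff_re.1 (hA.conj_eigenvalue_eq_self hev)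
    have hBy : B y ∈ Module.End.eigenspace A μ' := by
      rw [← hre] at hy ⊢
      exact key μ'.re y hy
    have h1 : A y = μ' • y := Module.End.mem_eigenspace_iff.1 hy
    have h2 : A (B y) = μ' • B y := Module.End.mem_eigenspace_iff.1 hBy
    rw [h2, h1]
    exact (B.map_smul μ' y).symm
  · simp
  · intro y z hy hz
    simp [map_add, hy, hz]
end
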